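/- (Lemma 4, conformance of composition.) Let R1, R2 be FSMr machines (requirement FSMv's) for two features and D1, D2 the corresponding FSMd machines (design FSMv's), with Di and Ri sharing the event alphabet Σi, the variable sets of D1, D2, R1, R2 being pairwise disjoint. Suppose D1 ≤Φ1 R1 and D2 ≤Φ2 R2 via conformance mappings Φ1 and Φ2. Let D1 ∥ D2 be composed with a design composition predicate and R1 ∥ R2 with a requirement composition predicate, and define the addition Φ = Φ1 + Φ2 by: for every valid configuration π^d = π^d_1 + π^d_2 of D1 ∥ D2, Φ(π^d) = { π^r : π^r is a valid configuration of R1 ∥ R2 and π^r = π^r_1 + π^r_2 for some π^r_1 ∈ Φ1(π^d_1) and π^r_2 ∈ Φ2(π^d_2) }. Then for every valid configuration π^d of D1 ∥ D2 and every π^r ∈ Φ(π^d), L((D1 ∥ D2)↓π^d) ⊆ L((R1 ∥ R2)↓π^r). -/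

import Mathlib

attribute [local instance] Classical.propDecidable

/-- A configuration over a set `S` of variables: an assignment of a value in
`Dm x` to every variable `x ∈ S`. -/
def Config {V : Type} (Dm : V → Type) (S : Set V) : Type :=
  ∀ x : V, x ∈ S → Dm x

/-- The restriction of a configuration over `S ∪ T` to `S`. -/
def Config.restrictL {V : Type} {Dm : V → Type} {S T : Set V}
    (π : Config Dm (S ∪ T)) : Config Dm S :=
  fun x hx => π x (Set.mem_union_left T hx)

/-- The restriction of a configuration over `S ∪ T` to `T`. -/
def Config.restrictR {V : Type} {Dm : V → Type} {S T : Set V}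
    (π : Config Dm (S ∪ T)) : Config Dm T :=
  fun x hx => π x (Set.mem_union_right S hx)

/-- `π1 + π2`: the configuration over `S ∪ T` agreeing with `π1` on `S` and
with `π2` on `T` (unique when `S` and `T` are disjoint). -/
noncomputable def Config.plus {V : Type} {Dm : V → Type} {S T : Set V}
    (π1 : Config Dm S) (π2 : Config Dm T) : Config Dm (S ∪ T) :=
  fun x hx =>
    if h : x ∈ S then π1 x h
    else π2 x (((Set.mem_union x S T).mp hx).resolve_left h)

/-- A finite state machine with variability (FSMv): states `Q` with initial state
`q0`, event alphabet `alph ⊆ Ev`, variable set `Vars ⊆ V`, guarded transitions `E`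
(each transition `(s, g, a, s')` has its event `a` in the alphabet), and a global
predicate `ρ` on configurations; a configuration `π` is *valid* if `ρ π` holds. -/
structure FSMv (V : Type) (Dm : V → Type) (Ev : Type) : Type 1 where
  Q : Type
  q0 : Q
  alph : Set Ev
  Vars : Set V
  E : Set (Q × (Config Dm Vars → Prop) × Ev × Q)
  E_alph : ∀ s g a s', (s, g, a, s') ∈ E → a ∈ alph
  ρ : Config Dm Vars → Prop

/-- `A.Reach π w s`: in the variant `A↓π` there is a path from the initial state
to `s` labelled `w`, using only transitions whose guards are satisfied by `π`. -/
inductive FSMv.Reach {V Ev : Type} {Dm : V → Type} (A : FSMv V Dm Ev)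
    (π : Config Dm A.Vars) : List Ev → A.Q → Prop
  | nil : FSMv.Reach A π [] A.q0
  | snoc {w : List Ev} {s : A.Q} {g : Config Dm A.Vars → Prop} {a : Ev} {s' : A.Q} :
      FSMv.Reach A π w s → (s, g, a, s') ∈ A.E → g π → FSMv.Reach A π (w ++ [a]) s'

/-- `A.Lang π = L(A↓π)`: the language of the variant of `A` under configuration `π`. -/
def FSMv.Lang {V Ev : Type} {Dm : V → Type} (A : FSMv V Dm Ev)
    (π : Config Dm A.Vars) : Set (List Ev) :=
  { w | ∃ s, A.Reach π w s }

/-- The parallel composition `A1 ∥ A2` of two FSMv's (over disjoint variable sets)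
with composition predicate `ρ12`: machines synchronize on shared events
`H = Σ1 ∩ Σ2` and move independently on private events; its global predicate
is `ρ12 ∧ ρ1 ∧ ρ2`. -/
def FSMv.par {V Ev : Type} {Dm : V → Type} (A1 A2 : FSMv V Dm Ev)
    (ρ12 : Config Dm (A1.Vars ∪ A2.Vars) → Prop) : FSMv V Dm Ev where
  Q := A1.Q × A2.Q
  q0 := (A1.q0, A2.q0)
  alph := A1.alph ∪ A2.alph
  Vars := A1.Vars ∪ A2.Vars
  E := { t | ∃ (s1 s1' : A1.Q) (s2 s2' : A2.Q) (a : Ev)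
      (g : Config Dm (A1.Vars ∪ A2.Vars) → Prop),
      t = ((s1, s2), g, a, (s1', s2')) ∧
      ((a ∈ A1.alph ∩ A2.alph ∧
          ∃ g1 g2, (s1, g1, a, s1') ∈ A1.E ∧ (s2, g2, a, s2') ∈ A2.E ∧
            g = fun π => g1 π.restrictL ∧ g2 π.restrictR) ∨
       (a ∈ A1.alph \ A2.alph ∧ s2' = s2 ∧
          ∃ g1, (s1, g1, a, s1') ∈ A1.E ∧ g = fun π => g1 π.restrictL) ∨
       (a ∈ A2.alph \ A1.alph ∧ s1' = s1 ∧
          ∃ g2, (s2, g2, a, s2') ∈ A2.E ∧ g = fun π => g2 π.restrictR)) }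
  E_alph := by
    rintro s g a s' ⟨s1, s1', s2, s2', a', g', heq, h⟩
    simp only [Prod.mk.injEq] at heq
    obtain ⟨rfl, rfl, rfl, rfl⟩ := heq
    rcases h with h | h | h
    · exact Set.mem_union_left _ h.1.1
    · exact Set.mem_union_left _ h.1.1
    · exact Set.mem_union_right _ h.1.1
  ρ := fun π => ρ12 π ∧ A1.ρ π.restrictL ∧ A2.ρ π.restrictR

/-- `Φ` is a conformance mapping from the design FSMv `D` to the requirement FSMv
`R` (written `D ≤Φ R`): it assigns to every valid configuration `πd` of `D` a
nonempty set of valid configurations of `R`, with `L(D↓πd) ⊆ L(R↓πr)` for every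
`πr ∈ Φ πd`. -/
def ConformanceMapping {V Ev : Type} {Dm : V → Type} (D R : FSMv V Dm Ev)
    (Φ : Config Dm D.Vars → Set (Config Dm R.Vars)) : Prop :=
  ∀ πd : Config Dm D.Vars, D.ρ πd →
    (Φ πd).Nonempty ∧ ∀ πr ∈ Φ πd, R.ρ πr ∧ D.Lang πd ⊆ R.Lang πr

/-!
A word is accepted by a composition `A1 ∥ A2` under `π` exactly when it uses only events of
`Σ1 ∪ Σ2` and its projections onto `Σ1` and `Σ2` are accepted by `A1` and `A2` under the
restrictions of `π`: each component follows the word's events in its own alphabet and idles on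
the others. Hence language inclusion between the components lifts to the compositions, and the
configuration `πr1 + πr2` restricts back to `πr1` and `πr2` because the variable sets of
`R1` and `R2` are disjoint.
-/

namespace Config

variable {V : Type} {Dm : V → Type} {S T : Set V}

theorem restrictL_plus (π1 : Config Dm S) (π2 : Config Dm T) :
    (π1.plus π2).restrictL = π1 := by
  funext x hx
  simp [plus, restrictL, hx]

theorem restrictR_plus (h : Disjoint S T) (π1 : Config Dm S) (π2 : Config Dm T) :
    (π1.plus π2).restrictR = π2 := by
  funext x hx
  simp [plus, restrictR, Set.disjoint_right.mp h hx]

end Config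

namespace FSMv

variable {V Ev : Type} {Dm : V → Type}

def Step (A : FSMv V Dm Ev) (π : Config Dm A.Vars) (s : A.Q) (a : Ev) (s' : A.Q) : Prop :=
  ∃ g, (s, g, a, s') ∈ A.E ∧ g π

def StepOrStay (A : FSMv V Dm Ev) (π : Config Dm A.Vars) (s : A.Q) (a : Ev) (s' : A.Q) :
    Prop :=
  if a ∈ A.alph then A.Step π s a s' else s' = s

section Reach

variable {A : FSMv V Dm Ev} {π : Config Dm A.Vars}

theorem reach_nil_iff {s : A.Q} : A.Reach π [] s ↔ s = A.q0 := by
  constructor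
  · intro h
    generalize hw : ([] : List Ev) = w at h
    cases h with
    | nil => rfl
    | snoc => exact absurd hw.symm (List.concat_ne_nil _ _)
  · rintro rfl
    exact .nil

theorem reach_snoc_iff {w : List Ev} {a : Ev} {s' : A.Q} :
    A.Reach π (w ++ [a]) s' ↔ ∃ s, A.Reach π w s ∧ A.Step π s a s' := by
  constructor
  · intro h
    generalize hw : w ++ [a] = u at h
    cases h with
    | nil => simp at hw
    | snoc h hE hg =>
      obtain ⟨rfl, ha⟩ := List.append_inj' hw rfl
      obtain rfl : a = _ := List.singleton_inj.mp ha
      exact ⟨_, h, _, hE, hg⟩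
  · rintro ⟨s, h, g, hE, hg⟩
    exact h.snoc hE hg

theorem reach_filter_snoc_iff {w : List Ev} {a : Ev} {s' : A.Q} :
    A.Reach π ((w ++ [a]).filter (· ∈ A.alph)) s' ↔
      ∃ s, A.Reach π (w.filter (· ∈ A.alph)) s ∧ A.StepOrStay π s a s' := by
  by_cases ha : a ∈ A.alph
  · simp [List.filter_append, ha, StepOrStay, reach_snoc_iff]
  · simp [List.filter_append, ha, StepOrStay]

end Reach

section Composition

variable {A1 A2 : FSMv V Dm Ev} {ρ12 : Config Dm (A1.Vars ∪ A2.Vars) → Prop}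
  {π : Config Dm (A1.par A2 ρ12).Vars}

theorem step_par_iff {s s' : (A1.par A2 ρ12).Q} {a : Ev} :
    (A1.par A2 ρ12).Step π s a s' ↔ a ∈ A1.alph ∪ A2.alph ∧
      A1.StepOrStay π.restrictL s.1 a s'.1 ∧ A2.StepOrStay π.restrictR s.2 a s'.2 := by
  obtain ⟨s1, s2⟩ := s
  obtain ⟨s1', s2'⟩ := s'
  constructor
  · rintro ⟨g, ⟨_, _, _, _, _, _, heq, hcase⟩, hg⟩
    cases heq
    rcases hcase with ⟨⟨ha1, ha2⟩, g1, g2, hE1, hE2, rfl⟩ |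
        ⟨⟨ha1, ha2⟩, rfl, g1, hE1, rfl⟩ | ⟨⟨ha2, ha1⟩, rfl, g2, hE2, rfl⟩
    · simp only [StepOrStay, if_pos ha1, if_pos ha2]
      exact ⟨.inl ha1, ⟨g1, hE1, hg.1⟩, ⟨g2, hE2, hg.2⟩⟩
    · simp only [StepOrStay, if_pos ha1, if_neg ha2]
      exact ⟨.inl ha1, ⟨g1, hE1, hg⟩, trivial⟩
    · simp only [StepOrStay, if_neg ha1, if_pos ha2]
      exact ⟨.inr ha2, trivial, ⟨g2, hE2, hg⟩⟩
  · rintro ⟨ha, h1, h2⟩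
    by_cases ha1 : a ∈ A1.alph <;> by_cases ha2 : a ∈ A2.alph <;>
      simp only [StepOrStay, ha1, ha2, if_true, if_false] at h1 h2
    · obtain ⟨g1, hE1, hg1⟩ := h1
      obtain ⟨g2, hE2, hg2⟩ := h2
      exact ⟨_, ⟨_, _, _, _, _, _, rfl, .inl ⟨⟨ha1, ha2⟩, g1, g2, hE1, hE2, rfl⟩⟩, hg1, hg2⟩
    · obtain ⟨g1, hE1, hg1⟩ := h1
      subst h2
      exact ⟨_, ⟨_, _, _, _, _, _, rfl, .inr (.inl ⟨⟨ha1, ha2⟩, rfl, g1, hE1, rfl⟩)⟩, hg1⟩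
    · obtain ⟨g2, hE2, hg2⟩ := h2
      subst h1
      exact ⟨_, ⟨_, _, _, _, _, _, rfl, .inr (.inr ⟨⟨ha2, ha1⟩, rfl, g2, hE2, rfl⟩)⟩, hg2⟩
    · exact absurd ha (by simp [ha1, ha2])

theorem reach_par_iff {w : List Ev} {s : (A1.par A2 ρ12).Q} :
    (A1.par A2 ρ12).Reach π w s ↔ (∀ a ∈ w, a ∈ A1.alph ∪ A2.alph) ∧
      A1.Reach π.restrictL (w.filter (· ∈ A1.alph)) s.1 ∧
      A2.Reach π.restrictR (w.filter (· ∈ A2.alph)) s.2 := by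
  induction w using List.reverseRecOn generalizing s with
  | nil =>
    simp only [List.filter_nil, reach_nil_iff, List.not_mem_nil, IsEmpty.forall_iff,
      implies_true, true_and]
    exact Prod.ext_iff
  | append_singleton w a ih =>
    simp only [reach_snoc_iff, reach_filter_snoc_iff, ih, step_par_iff, List.mem_append,
      List.mem_singleton, or_imp, forall_and, forall_eq]
    constructor
    · rintro ⟨t, ⟨hw, h1, h2⟩, ha, hs1, hs2⟩
      exact ⟨⟨hw, ha⟩, ⟨t.1, h1, hs1⟩, ⟨t.2, h2, hs2⟩⟩
    · rintro ⟨⟨hw, ha⟩, ⟨t1, h1, hs1⟩, ⟨t2, h2, hs2⟩⟩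
      exact ⟨(t1, t2), ⟨hw, h1, h2⟩, ha, hs1, hs2⟩

theorem mem_lang_par_iff {w : List Ev} :
    w ∈ (A1.par A2 ρ12).Lang π ↔ (∀ a ∈ w, a ∈ A1.alph ∪ A2.alph) ∧
      w.filter (· ∈ A1.alph) ∈ A1.Lang π.restrictL ∧
      w.filter (· ∈ A2.alph) ∈ A2.Lang π.restrictR := by
  simp only [Lang, Set.mem_ofPred_eq, reach_par_iff]
  constructor
  · rintro ⟨s, hw, h1, h2⟩
    exact ⟨hw, ⟨s.1, h1⟩, ⟨s.2, h2⟩⟩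
  · rintro ⟨hw, ⟨s1, h1⟩, ⟨s2, h2⟩⟩
    exact ⟨(s1, s2), hw, h1, h2⟩

theorem lang_par_subset_lang_par {B1 B2 : FSMv V Dm Ev}
    {σ12 : Config Dm (B1.Vars ∪ B2.Vars) → Prop} {σ : Config Dm (B1.Vars ∪ B2.Vars)}
    (halph1 : A1.alph = B1.alph) (halph2 : A2.alph = B2.alph)
    (h1 : A1.Lang π.restrictL ⊆ B1.Lang σ.restrictL)
    (h2 : A2.Lang π.restrictR ⊆ B2.Lang σ.restrictR) :
    (A1.par A2 ρ12).Lang π ⊆ (B1.par B2 σ12).Lang σ := by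
  intro w hw
  rw [mem_lang_par_iff, halph1, halph2] at hw
  obtain ⟨halph, hw1, hw2⟩ := hw
  exact mem_lang_par_iff.mpr ⟨halph, h1 hw1, h2 hw2⟩

end Composition

end FSMv

theorem conformance_of_composition_general
    {V Ev : Type} {Dm : V → Type}
    (D1 D2 R1 R2 : FSMv V Dm Ev)
    (halph1 : D1.alph = R1.alph) (halph2 : D2.alph = R2.alph)
    (hdisj : List.Pairwise Disjoint [D1.Vars, D2.Vars, R1.Vars, R2.Vars])
    (ρd12 : Config Dm (D1.Vars ∪ D2.Vars) → Prop)
    (ρr12 : Config Dm (R1.Vars ∪ R2.Vars) → Prop)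
    (Φ1 : Config Dm D1.Vars → Set (Config Dm R1.Vars))
    (Φ2 : Config Dm D2.Vars → Set (Config Dm R2.Vars))
    (hΦ1 : ConformanceMapping D1 R1 Φ1)
    (hΦ2 : ConformanceMapping D2 R2 Φ2)
    (Φ : Config Dm (D1.Vars ∪ D2.Vars) → Set (Config Dm (R1.Vars ∪ R2.Vars)))
    (hΦ : ∀ πd : Config Dm (D1.Vars ∪ D2.Vars),
      Φ πd = { πr | (R1.par R2 ρr12).ρ πr ∧
        ∃ πr1 ∈ Φ1 πd.restrictL, ∃ πr2 ∈ Φ2 πd.restrictR, πr = πr1.plus πr2 })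
    (πd : Config Dm (D1.Vars ∪ D2.Vars))
    (hπd : (D1.par D2 ρd12).ρ πd)
    (πr : Config Dm (R1.Vars ∪ R2.Vars))
    (hπr : πr ∈ Φ πd) :
    (D1.par D2 ρd12).Lang πd ⊆ (R1.par R2 ρr12).Lang πr := by
  rw [hΦ πd] at hπr
  obtain ⟨-, πr1, hπr1, πr2, hπr2, rfl⟩ := hπr
  have hdisjR : Disjoint R1.Vars R2.Vars := by
    simp only [List.pairwise_cons, List.mem_cons] at hdisj
    exact hdisj.2.2.1 _ (.inl rfl)
  apply FSMv.lang_par_subset_lang_par halph1 halph2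
  · rw [Config.restrictL_plus]
    exact ((hΦ1 _ hπd.2.1).2 πr1 hπr1).2
  · rw [Config.restrictR_plus hdisjR]
    exact ((hΦ2 _ hπd.2.2).2 πr2 hπr2).2

/-- **Lemma 4 (conformance of composition).** Let `R1, R2` be requirement FSMv's
and `D1, D2` the corresponding design FSMv's, `Di` and `Ri` sharing the alphabet,
the four variable sets pairwise disjoint, with `D1 ≤Φ1 R1` and `D2 ≤Φ2 R2`.
Compose the designs by `ρd12` and the requirements by `ρr12`, and let
`Φ = Φ1 + Φ2` map each valid configuration `πd = πd1 + πd2` of `D1 ∥ D2` to the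
set of valid configurations `πr = πr1 + πr2` of `R1 ∥ R2` with `πr1 ∈ Φ1 πd1` and
`πr2 ∈ Φ2 πd2`.  Then for every valid configuration `πd` of `D1 ∥ D2` and every
`πr ∈ Φ πd`, `L((D1 ∥ D2)↓πd) ⊆ L((R1 ∥ R2)↓πr)`. -/
theorem conformance_of_composition
    {V Ev : Type} {Dm : V → Type} [∀ x, Finite (Dm x)] [∀ x, Nonempty (Dm x)]
    (D1 D2 R1 R2 : FSMv V Dm Ev)
    (halph1 : D1.alph = R1.alph) (halph2 : D2.alph = R2.alph)
    (hdisj : List.Pairwise Disjoint [D1.Vars, D2.Vars, R1.Vars, R2.Vars])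
    (ρd12 : Config Dm (D1.Vars ∪ D2.Vars) → Prop)
    (ρr12 : Config Dm (R1.Vars ∪ R2.Vars) → Prop)
    (Φ1 : Config Dm D1.Vars → Set (Config Dm R1.Vars))
    (Φ2 : Config Dm D2.Vars → Set (Config Dm R2.Vars))
    (hΦ1 : ConformanceMapping D1 R1 Φ1)
    (hΦ2 : ConformanceMapping D2 R2 Φ2)
    (Φ : Config Dm (D1.Vars ∪ D2.Vars) → Set (Config Dm (R1.Vars ∪ R2.Vars)))
    (hΦ : ∀ πd : Config Dm (D1.Vars ∪ D2.Vars),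
      Φ πd = { πr | (R1.par R2 ρr12).ρ πr ∧
        ∃ πr1 ∈ Φ1 πd.restrictL, ∃ πr2 ∈ Φ2 πd.restrictR, πr = πr1.plus πr2 })
    (πd : Config Dm (D1.Vars ∪ D2.Vars))
    (hπd : (D1.par D2 ρd12).ρ πd)
    (πr : Config Dm (R1.Vars ∪ R2.Vars))
    (hπr : πr ∈ Φ πd) :
    (D1.par D2 ρd12).Lang πd ⊆ (R1.par R2 ρr12).Lang πr :=
  conformance_of_composition_general D1 D2 R1 R2 halph1 halph2 hdisj ρd12 ρr12 Φ1 Φ2 hΦ1 hΦ2 Φ hΦ πd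
    hπd πr hπr
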